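/- arXiv:0707.0704 — 6 statements merged into one kernel-verified Lean document; each statement's English description precedes it below -/
import Mathlib

section
/- For any symmetric matrix X with a I ⪯ X ⪯ b I where 0 < a < b, and any symmetric matrix H, trace(X^{-1} H X^{-1} H) ≥ b^{-2} ‖H‖_F^2. -/
/-!
With `Y = X⁻¹` and `c = b⁻¹` we have `Y ⪰ c I`. Since `trace (A B) ≥ 0` for positive semidefinite
`A, B`, the trace pairing is monotone in each positive semidefinite argument, and both `H Y H` and
`H H` are positive semidefinite, so
`trace (Y H Y H) ≥ c · trace (H Y H) = c · trace (Y H H) ≥ c² · trace (H H) = c² ‖H‖_F²`.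
-/

open scoped ComplexOrder MatrixOrder

namespace Matrix

variable {n 𝕜 : Type*} [Fintype n] [RCLike 𝕜]

theorem PosSemidef.trace_mul_nonneg {A B : Matrix n n 𝕜} (hA : A.PosSemidef)
    (hB : B.PosSemidef) : 0 ≤ (A * B).trace := by
  classical
  obtain ⟨C, rfl⟩ := CStarAlgebra.nonneg_iff_eq_star_mul_self.mp hB.nonneg
  rw [star_eq_conjTranspose, ← Matrix.mul_assoc, trace_mul_comm, ← Matrix.mul_assoc]
  exact (hA.mul_mul_conjTranspose_same C).trace_nonneg

theorem PosSemidef.trace_mul_le_trace_mul {A A' B : Matrix n n 𝕜} (hA : (A' - A).PosSemidef)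
    (hB : B.PosSemidef) : (A * B).trace ≤ (A' * B).trace := by
  simpa [sub_mul, trace_sub] using hA.trace_mul_nonneg hB

theorem IsHermitian.trace_mul_self_eq_sum_sq {H : Matrix n n ℝ} (hH : H.IsHermitian) :
    (H * H).trace = ∑ i, ∑ j, H i j ^ 2 := by
  simp only [trace, diag, mul_apply, sq]
  exact Finset.sum_congr rfl fun i _ => Finset.sum_congr rfl fun j _ => by rw [← hH.apply j i]; rfl

variable [DecidableEq n]

omit [Fintype n] in
theorem PosDef.of_posSemidef_sub_smul_one {X : Matrix n n 𝕜} {a : ℝ} (ha : 0 < a)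
    (hXa : (X - a • 1).PosSemidef) : X.PosDef := by
  simpa using (PosDef.one.smul ha).add_posSemidef hXa

theorem PosDef.posSemidef_inv_sub_inv_smul_one {X : Matrix n n 𝕜} (hX : X.PosDef) {b : ℝ}
    (hb : 0 < b) (hXb : (b • 1 - X).PosSemidef) : (X⁻¹ - b⁻¹ • 1).PosSemidef := by
  have hXinv : X * X⁻¹ = 1 := mul_nonsing_inv X (isUnit_iff_isUnit_det X |>.mp hX.isUnit)
  have hinvX : X⁻¹ * X = 1 := nonsing_inv_mul X (isUnit_iff_isUnit_det X |>.mp hX.isUnit)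
  -- `(b - X) X⁻¹ (b - X) + (b - X) = b ^ 2 X⁻¹ - b`, a sum of positive semidefinite matrices
  have key : X⁻¹ - b⁻¹ • 1 = (b⁻¹ ^ 2) • ((b • 1 - X)ᴴ * X⁻¹ * (b • 1 - X) + (b • 1 - X)) := by
    rw [hXb.isHermitian.eq]
    simp only [sub_mul, mul_sub, smul_mul_assoc, mul_smul_comm, Matrix.one_mul, Matrix.mul_one,
      hXinv, hinvX, smul_sub, smul_add, smul_smul]
    match_scalars <;> field_simp <;> ring
  rw [key]
  exact ((hX.inv.posSemidef.conjTranspose_mul_mul_same _).add hXb).smul (by positivity)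

theorem IsHermitian.sq_smul_trace_mul_self_le_trace_mul_mul_mul {Y H : Matrix n n 𝕜} {c : ℝ}
    (hc : 0 ≤ c) (hY : (Y - c • 1).PosSemidef) (hH : H.IsHermitian) :
    c ^ 2 • (H * H).trace ≤ (Y * H * Y * H).trace := by
  have hY' : Y.PosSemidef := by simpa using hY.add (PosSemidef.one.smul hc)
  have hHYH : (H * Y * H).PosSemidef := by
    simpa [hH.eq] using hY'.conjTranspose_mul_mul_same H
  have hHH : (H * H).PosSemidef := by simpa [hH.eq] using posSemidef_conjTranspose_mul_self H
  calc c ^ 2 • (H * H).trace = c • ((c • 1 : Matrix n n 𝕜) * (H * H)).trace := by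
        rw [smul_mul_assoc, Matrix.one_mul, trace_smul, smul_smul, sq]
    _ ≤ c • (Y * (H * H)).trace := smul_le_smul_of_nonneg_left (hY.trace_mul_le_trace_mul hHH) hc
    _ = ((c • 1 : Matrix n n 𝕜) * (H * Y * H)).trace := by
        rw [smul_mul_assoc, Matrix.one_mul, trace_smul, trace_mul_cycle H Y H,
          trace_mul_comm (H * H)]
    _ ≤ (Y * (H * Y * H)).trace := hY.trace_mul_le_trace_mul hHYH
    _ = (Y * H * Y * H).trace := by simp only [Matrix.mul_assoc]

end Matrix

theorem trace_inv_H_inv_H_ge_general (p : ℕ) (X H : Matrix (Fin p) (Fin p) ℝ)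
    (hH : H.IsHermitian) (a b : ℝ) (ha : 0 < a) (hab : a < b)
    (hXa : (X - a • (1 : Matrix (Fin p) (Fin p) ℝ)).PosSemidef)
    (hXb : ((b • (1 : Matrix (Fin p) (Fin p) ℝ)) - X).PosSemidef) :
    (X⁻¹ * H * X⁻¹ * H).trace ≥ b⁻¹ ^ 2 * ∑ i, ∑ j, (H i j) ^ 2 := by
  have hb : 0 < b := ha.trans hab
  have hX : X.PosDef := .of_posSemidef_sub_smul_one ha hXa
  have hXinv_ge := hX.posSemidef_inv_sub_inv_smul_one hb hXb
  rw [ge_iff_le, ← hH.trace_mul_self_eq_sum_sq]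
  exact hH.sq_smul_trace_mul_self_le_trace_mul_mul_mul (inv_nonneg.mpr hb.le) hXinv_ge

theorem trace_inv_H_inv_H_ge (p : ℕ) (X H : Matrix (Fin p) (Fin p) ℝ)
    (hX : X.IsHermitian) (hH : H.IsHermitian) (a b : ℝ) (ha : 0 < a) (hab : a < b)
    (hXa : (X - a • (1 : Matrix (Fin p) (Fin p) ℝ)).PosSemidef)
    (hXb : ((b • (1 : Matrix (Fin p) (Fin p) ℝ)) - X).PosSemidef) :
    (X⁻¹ * H * X⁻¹ * H).trace ≥ b⁻¹ ^ 2 * ∑ i, ∑ j, (H i j) ^ 2 :=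
  trace_inv_H_inv_H_ge_general p X H hH a b ha hab hXa hXb
end

section
/- The problem min_y { y^T Q^{-1} y : ‖y - s‖_∞ ≤ λ } and the problem min_x { x^T Q x - 2 s^T x + 2λ‖x‖_1 } are dual to each other with zero duality gap; in particular the optimal values satisfy strong duality, with the relation y = Q x at optimality. -/
/-!
Let `F` be the Lasso objective. The dual problem minimizes the quadratic form of `Q⁻¹` over the
box `‖y - s‖_∞ ≤ λ`, which is compact, so it has a minimizer `y`; put `x = Q⁻¹ y`. Weak duality
`-F(x') ≤ zᵀQ⁻¹z` for every feasible `z` is the Fenchel–Young inequality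
`2 zᵀx' - x'ᵀQx' ≤ zᵀQ⁻¹z` combined with `zᵀx' ≥ sᵀx' - λ‖x'‖₁`. Conversely, first-order
optimality of `y` tested against the vertex `z = s - λ sign x` of the box gives
`yᵀx ≤ sᵀx - λ‖x‖₁`, i.e. `yᵀQ⁻¹y ≤ -F(x)`. Hence the gap is zero and `x` minimizes `F`.
-/

open Matrix

section LassoDuality

variable {ι : Type*} [Fintype ι]

def lassoObjective (Q : Matrix ι ι ℝ) (s : ι → ℝ) (lam : ℝ) (x : ι → ℝ) : ℝ :=
  x ⬝ᵥ Q *ᵥ x - 2 * (s ⬝ᵥ x) + 2 * lam * ∑ i, |x i|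

lemma forall_abs_sub_le_iff_mem_closedBall {s z : ι → ℝ} {lam : ℝ} (hlam : 0 ≤ lam) :
    (∀ i, |z i - s i| ≤ lam) ↔ z ∈ Metric.closedBall s lam := by
  simp only [mem_closedBall_iff_norm, pi_norm_le_iff_of_nonneg hlam, Pi.sub_apply,
    Real.norm_eq_abs]

lemma nonneg_of_forall_mem_Ioc_nonneg_add_mul {a b : ℝ}
    (h : ∀ t ∈ Set.Ioc (0 : ℝ) 1, 0 ≤ a + t * b) : 0 ≤ a := by
  have hlim : Filter.Tendsto (fun t : ℝ => a + t * b) (nhdsWithin 0 (Set.Ioi 0)) (nhds a) := by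
    have : Continuous (fun t : ℝ => a + t * b) := by fun_prop
    simpa using (this.tendsto 0).mono_left nhdsWithin_le_nhds
  refine ge_of_tendsto hlim ?_
  filter_upwards [Ioc_mem_nhdsGT zero_lt_one] with t ht using h t ht

lemma IsMinOn.dotProduct_mulVec_nonneg {P : Matrix ι ι ℝ} (hP : P.IsSymm) {K : Set (ι → ℝ)}
    (hK : Convex ℝ K) {y z : ι → ℝ} (hy : y ∈ K) (hz : z ∈ K)
    (hmin : IsMinOn (fun v => v ⬝ᵥ P *ᵥ v) K y) : 0 ≤ (z - y) ⬝ᵥ P *ᵥ y := by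
  set d := z - y
  have hexpand : ∀ t : ℝ, (y + t • d) ⬝ᵥ P *ᵥ (y + t • d)
      = y ⬝ᵥ P *ᵥ y + t * (2 * (d ⬝ᵥ P *ᵥ y) + t * (d ⬝ᵥ P *ᵥ d)) := by
    intro t
    have hsymm : y ⬝ᵥ P *ᵥ d = d ⬝ᵥ P *ᵥ y := by
      rw [← dotProduct_transpose_mulVec, hP.eq]
    simp only [mulVec_add, mulVec_smul, add_dotProduct, dotProduct_add, smul_dotProduct,
      dotProduct_smul, smul_eq_mul, hsymm]
    ring
  refine nonneg_of_forall_mem_Ioc_nonneg_add_mul (b := d ⬝ᵥ P *ᵥ d / 2) fun t ⟨ht0, ht1⟩ => ?_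
  have hmem : y + t • d ∈ K := by
    simpa [d, add_comm] using hK.add_smul_sub_mem hy hz ⟨ht0.le, ht1⟩
  have hle : y ⬝ᵥ P *ᵥ y ≤ (y + t • d) ⬝ᵥ P *ᵥ (y + t • d) := hmin hmem
  rw [hexpand, le_add_iff_nonneg_right, mul_nonneg_iff_of_pos_left ht0] at hle
  linarith

lemma dotProduct_sub_mul_sum_abs_le {s z : ι → ℝ} {lam : ℝ} (hz : ∀ i, |z i - s i| ≤ lam)
    (x : ι → ℝ) : s ⬝ᵥ x - lam * ∑ i, |x i| ≤ z ⬝ᵥ x := by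
  have hterm : ∀ i, (s i - z i) * x i ≤ lam * |x i| := fun i =>
    calc (s i - z i) * x i ≤ |(s i - z i) * x i| := le_abs_self _
      _ = |z i - s i| * |x i| := by rw [abs_mul, abs_sub_comm]
      _ ≤ lam * |x i| := by gcongr; exact hz i
  have hsum := Finset.sum_le_sum fun i (_ : i ∈ Finset.univ) => hterm i
  simp only [sub_mul, Finset.sum_sub_distrib, ← Finset.mul_sum] at hsum
  simp only [dotProduct]
  linarith

lemma exists_dotProduct_eq_sub_mul_sum_abs (s : ι → ℝ) {lam : ℝ} (hlam : 0 ≤ lam)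
    (x : ι → ℝ) : ∃ z : ι → ℝ, (∀ i, |z i - s i| ≤ lam) ∧ z ⬝ᵥ x = s ⬝ᵥ x - lam * ∑ i, |x i| := by
  refine ⟨fun i => s i - lam * SignType.sign (x i), fun i => ?_, ?_⟩
  · rw [sub_sub_cancel_left, abs_neg, abs_mul, abs_of_nonneg hlam]
    exact mul_le_of_le_one_right hlam (by rcases lt_trichotomy (x i) 0 with h | h | h <;> simp [h])
  · simp only [dotProduct, sub_mul, Finset.sum_sub_distrib, Finset.mul_sum, mul_assoc,
      sign_mul_self]

variable [DecidableEq ι]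

lemma Matrix.PosDef.two_mul_dotProduct_sub_le {Q : Matrix ι ι ℝ} (hQ : Q.PosDef)
    (x z : ι → ℝ) : 2 * (z ⬝ᵥ x) - x ⬝ᵥ Q *ᵥ x ≤ z ⬝ᵥ Q⁻¹ *ᵥ z := by
  have hinv : Q⁻¹ *ᵥ (Q *ᵥ x) = x := by
    rw [mulVec_mulVec, nonsing_inv_mul Q ((isUnit_iff_isUnit_det Q).mp hQ.isUnit), one_mulVec]
  have hsymm : Q *ᵥ x ⬝ᵥ Q⁻¹ *ᵥ z = z ⬝ᵥ x := by
    rw [← dotProduct_transpose_mulVec, (isHermitian_iff_isSymm.mp hQ.inv.isHermitian).eq,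
      hinv]
  have hnonneg := hQ.inv.posSemidef.dotProduct_mulVec_nonneg (z - Q *ᵥ x)
  simp only [star_trivial, mulVec_sub, sub_dotProduct, dotProduct_sub, hinv, hsymm] at hnonneg
  rw [dotProduct_comm (Q *ᵥ x) x] at hnonneg
  linarith

theorem neg_lassoObjective_le {Q : Matrix ι ι ℝ} (hQ : Q.PosDef) {s z : ι → ℝ} {lam : ℝ}
    (hz : ∀ i, |z i - s i| ≤ lam) (x : ι → ℝ) : -lassoObjective Q s lam x ≤ z ⬝ᵥ Q⁻¹ *ᵥ z := by
  have hquad := hQ.two_mul_dotProduct_sub_le x z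
  have hlin := dotProduct_sub_mul_sum_abs_le hz x
  unfold lassoObjective
  linarith

end LassoDuality

theorem qp_lasso_strong_duality (n : ℕ) (Q : Matrix (Fin n) (Fin n) ℝ) (hQ : Q.PosDef)
    (s : Fin n → ℝ) (lam : ℝ) (hlam : 0 < lam) :
    ∃ x : Fin n → ℝ, ∃ y : Fin n → ℝ,
      y = Q *ᵥ x ∧
      (∀ i, |y i - s i| ≤ lam) ∧
      (∀ z : Fin n → ℝ, (∀ i, |z i - s i| ≤ lam) → y ⬝ᵥ Q⁻¹ *ᵥ y ≤ z ⬝ᵥ Q⁻¹ *ᵥ z) ∧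
      (∀ x' : Fin n → ℝ,
        x ⬝ᵥ Q *ᵥ x - 2 * (s ⬝ᵥ x) + 2 * lam * ∑ i, |x i| ≤
          x' ⬝ᵥ Q *ᵥ x' - 2 * (s ⬝ᵥ x') + 2 * lam * ∑ i, |x' i|) ∧
      y ⬝ᵥ Q⁻¹ *ᵥ y = -(x ⬝ᵥ Q *ᵥ x - 2 * (s ⬝ᵥ x) + 2 * lam * ∑ i, |x i|) := by
  have hfeas (z : Fin n → ℝ) := forall_abs_sub_le_iff_mem_closedBall (s := s) (z := z) hlam.le
  obtain ⟨y, hy, hmin⟩ := (isCompact_closedBall s lam).exists_isMinOn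
    (Metric.nonempty_closedBall.mpr hlam.le) (f := fun v => v ⬝ᵥ Q⁻¹ *ᵥ v) (by fun_prop)
  set x := Q⁻¹ *ᵥ y
  have hyx : y = Q *ᵥ x := by
    rw [mulVec_mulVec, mul_nonsing_inv Q ((isUnit_iff_isUnit_det Q).mp hQ.isUnit), one_mulVec]
  obtain ⟨z, hz, hzx⟩ := exists_dotProduct_eq_sub_mul_sum_abs s hlam.le x
  have hopt : 0 ≤ (z - y) ⬝ᵥ x := hmin.dotProduct_mulVec_nonneg
    (isHermitian_iff_isSymm.mp hQ.inv.isHermitian) (convex_closedBall s lam) hy ((hfeas z).mp hz)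
  have hgap : y ⬝ᵥ Q⁻¹ *ᵥ y ≤ -lassoObjective Q s lam x := by
    rw [sub_dotProduct] at hopt
    rw [lassoObjective, ← hyx, dotProduct_comm x y]
    linarith
  have hweak (x' : Fin n → ℝ) := neg_lassoObjective_le hQ ((hfeas y).mpr hy) x'
  refine ⟨x, y, hyx, (hfeas y).mpr hy, fun z' hz' => hmin ((hfeas z').mp hz'), fun x' => ?_,
    le_antisymm hgap (hweak x)⟩
  show lassoObjective Q s lam x ≤ lassoObjective Q s lam x'
  linarith [hweak x']
end

section
/- For a symmetric positive definite matrix Θ and vector θ, we have max_{X ≻ 0} (⟨Θ, X⟩ + log det X) = -log det(-Θ) - p when Θ is negative definite, i.e., sup over X ≻ 0 of trace(ΘX) + log det X equals -p - log det(-Θ) if Θ ≺ 0, and +∞ otherwise. -/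
/-!
Writing `-Θ = Bᴴ B` and `M = B X Bᴴ`, we get `⟨Θ, X⟩ + log det X = log det M - tr M - log det(-Θ)`,
and `log det M - tr M = ∑ (log λᵢ - λᵢ) ≤ -p` over the eigenvalues of `M`, with equality at
`M = 1`, i.e. `X = (-Θ)⁻¹`. If `-Θ` is not positive definite, some `x ≠ 0` has `xᵀΘx ≥ 0`, and
along `X = 1 + t xxᵀ` the objective is at least `tr Θ + log (1 + t ‖x‖²)`, which is unbounded.
-/

open Matrix

namespace Matrix

variable {n : Type*} [Fintype n]

theorem trace_mul_vecMulVec {R : Type*} [CommSemiring R] (M : Matrix n n R) (u v : n → R) :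
    (M * vecMulVec u v).trace = (M *ᵥ u) ⬝ᵥ v := by
  rw [mul_vecMulVec, trace_vecMulVec]

theorem exists_dotProduct_mulVec_nonneg_of_not_posDef_neg {Θ : Matrix n n ℝ}
    (hΘ : Θ.IsHermitian) (h : ¬(-Θ).PosDef) : ∃ x ≠ 0, 0 ≤ x ⬝ᵥ (Θ *ᵥ x) := by
  by_contra! hneg
  exact h <| .of_dotProduct_mulVec_pos hΘ.neg fun x hx ↦ by
    simpa [neg_mulVec] using hneg x hx

variable [DecidableEq n]

theorem det_one_add_vecMulVec {R : Type*} [CommRing R] (u v : n → R) :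
    (1 + vecMulVec u v).det = 1 + v ⬝ᵥ u := by
  rw [vecMulVec_eq Unit, det_one_add_replicateCol_mul_replicateRow]

theorem posDef_one_add_smul_vecMulVec_self {x : n → ℝ} {t : ℝ} (ht : 0 ≤ t) :
    (1 + t • vecMulVec x x).PosDef :=
  PosDef.one.add_posSemidef <| by simpa using (posSemidef_vecMulVec_self_star x).smul ht

theorem PosDef.log_det_le_trace_sub_card {M : Matrix n n ℝ} (hM : M.PosDef) :
    Real.log M.det ≤ M.trace - Fintype.card n := by
  have hpos := hM.eigenvalues_pos
  rw [hM.isHermitian.det_eq_prod_eigenvalues, hM.isHermitian.trace_eq_sum_eigenvalues]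
  simp only [RCLike.ofReal_real_eq_id, id_eq]
  rw [Real.log_prod fun i _ ↦ (hpos i).ne']
  calc ∑ i, Real.log (hM.isHermitian.eigenvalues i)
      ≤ ∑ i, (hM.isHermitian.eigenvalues i - 1) :=
        Finset.sum_le_sum fun i _ ↦ Real.log_le_sub_one_of_pos (hpos i)
    _ = _ := by simp [Finset.sum_sub_distrib]

open scoped MatrixOrder in
theorem PosDef.card_add_log_det_le_trace_mul_sub_log_det {A X : Matrix n n ℝ} (hA : A.PosDef)
    (hX : X.PosDef) : Fintype.card n + Real.log A.det ≤ (A * X).trace - Real.log X.det := by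
  obtain ⟨B, rfl⟩ := CStarAlgebra.nonneg_iff_eq_star_mul_self.mp hA.posSemidef.nonneg
  have hB : IsUnit B := by
    have := hA.isUnit
    rw [isUnit_iff_isUnit_det, det_mul] at this
    exact isUnit_iff_isUnit_det _ |>.mpr (isUnit_of_mul_isUnit_right this)
  have hM : (B * X * star B).PosDef := (IsUnit.posDef_star_right_conjugate_iff hB).mpr hX
  have htrace : (B * X * star B).trace = (star B * B * X).trace := by
    rw [trace_mul_cycle, Matrix.mul_assoc]
  have hdet : (B * X * star B).det = (star B * B).det * X.det := by
    simp only [det_mul]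
    ring
  have := hM.log_det_le_trace_sub_card
  rw [htrace, hdet, Real.log_mul hA.det_pos.ne' hX.det_pos.ne'] at this
  linarith

theorem isGreatest_trace_mul_add_log_det {Θ : Matrix n n ℝ} (hΘ : (-Θ).PosDef) :
    IsGreatest {v : ℝ | ∃ X : Matrix n n ℝ, X.PosDef ∧ v = (Θ * X).trace + Real.log X.det}
      (-(Fintype.card n : ℝ) - Real.log (-Θ).det) := by
  obtain ⟨A, rfl⟩ : ∃ A, Θ = -A := ⟨-Θ, (neg_neg Θ).symm⟩
  rw [neg_neg] at hΘ ⊢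
  refine ⟨⟨A⁻¹, hΘ.inv, ?_⟩, ?_⟩
  · rw [neg_mul, mul_nonsing_inv _ hΘ.det_pos.ne'.isUnit, det_nonsing_inv, Ring.inverse_eq_inv',
      Real.log_inv, trace_neg, trace_one]
    ring
  · rintro v ⟨X, hX, rfl⟩
    have := hΘ.card_add_log_det_le_trace_mul_sub_log_det hX
    rw [neg_mul, trace_neg]
    linarith

theorem exists_lt_trace_mul_add_log_det {Θ : Matrix n n ℝ} (hΘ : Θ.IsHermitian)
    (h : ¬(-Θ).PosDef) (c : ℝ) :
    ∃ X : Matrix n n ℝ, X.PosDef ∧ c < (Θ * X).trace + Real.log X.det := by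
  obtain ⟨x, hx, hq⟩ := exists_dotProduct_mulVec_nonneg_of_not_posDef_neg hΘ h
  have hs : 0 < x ⬝ᵥ x := by simpa using dotProduct_star_self_pos_iff.mpr hx
  set t := Real.exp (c - Θ.trace) / (x ⬝ᵥ x)
  have ht : 0 < t := by positivity
  refine ⟨1 + t • vecMulVec x x, posDef_one_add_smul_vecMulVec_self ht.le, ?_⟩
  have htrace : (Θ * (1 + t • vecMulVec x x)).trace = Θ.trace + t * (x ⬝ᵥ (Θ *ᵥ x)) := by
    rw [mul_add, mul_one, trace_add, Matrix.mul_smul, trace_smul, trace_mul_vecMulVec,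
      dotProduct_comm, smul_eq_mul]
  have hdet : (1 + t • vecMulVec x x).det = 1 + Real.exp (c - Θ.trace) := by
    rw [← smul_vecMulVec, det_one_add_vecMulVec, dotProduct_smul, smul_eq_mul,
      div_mul_cancel₀ _ hs.ne']
  have hlog : c - Θ.trace < Real.log (1 + Real.exp (c - Θ.trace)) := by
    rw [Real.lt_log_iff_exp_lt (by positivity)]
    linarith
  rw [htrace, hdet]
  linarith [mul_nonneg ht.le hq]

end Matrix

theorem sup_trace_add_logDet (p : ℕ) (Θ : Matrix (Fin p) (Fin p) ℝ)
    (hΘ : Θ.IsHermitian) :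
    ((-Θ).PosDef →
      IsGreatest {v : ℝ | ∃ X : Matrix (Fin p) (Fin p) ℝ, X.PosDef ∧
          v = (Θ * X).trace + Real.log X.det}
        (-(p : ℝ) - Real.log (-Θ).det)) ∧
    (¬ (-Θ).PosDef →
      ∀ c : ℝ, ∃ X : Matrix (Fin p) (Fin p) ℝ, X.PosDef ∧
        c < (Θ * X).trace + Real.log X.det) :=
  ⟨fun hA ↦ by simpa using isGreatest_trace_mul_add_log_det hA,
    exists_lt_trace_mul_add_log_det hΘ⟩
end

section
/- The optimal solution W of max { log det W : ‖W - S‖_∞ ≤ λ } over symmetric positive definite matrices satisfies W_{kk} = S_{kk} + λ for every diagonal index k. -/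
/-! If `W k k < S k k + lam`, raising `W k k` to `S k k + lam` keeps `W` positive definite and
feasible, and by cofactor expansion along row `k` it raises `det W` by
`e * adjugate W k k = e * det W * W⁻¹ k k > 0`, contradicting optimality. -/

open Matrix

namespace Matrix

variable {n : Type*} [DecidableEq n]

theorem add_single_self_eq_updateRow {R : Type*} [AddMonoid R] (W : Matrix n n R) (k : n)
    (e : R) :
    W + single k k e = W.updateRow k (W k + Pi.single k e) := by
  ext i j
  by_cases hi : i = k
  · subst hi
    by_cases hj : j = i <;> simp [hj, Ne.symm]
  · simp [hi, Ne.symm hi]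

theorem det_add_single_self {R : Type*} [CommRing R] [Fintype n] (W : Matrix n n R) (k : n)
    (e : R) :
    (W + single k k e).det = W.det + e * W.adjugate k k := by
  rw [add_single_self_eq_updateRow, det_updateRow_add, updateRow_eq_self, adjugate_apply,
    ← det_updateRow_smul, ← Pi.single_smul, smul_eq_mul, mul_one]

theorem PosDef.adjugate_apply_self_pos [Fintype n] {W : Matrix n n ℝ} (hW : W.PosDef) (k : n) :
    0 < W.adjugate k k := by
  have hinv : W⁻¹ k k = W.det⁻¹ * W.adjugate k k := by
    rw [inv_def, Ring.inverse_eq_inv, smul_apply, smul_eq_mul]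
  have hinv_pos : 0 < W⁻¹ k k := hW.inv.diag_pos
  rw [hinv] at hinv_pos
  exact pos_of_mul_pos_right hinv_pos (inv_nonneg.2 hW.det_pos.le)

theorem PosDef.add_single_self {R : Type*} [Ring R] [PartialOrder R] [StarRing R]
    [StarOrderedRing R] {W : Matrix n n R} (hW : W.PosDef) (k : n) {e : R} (he : 0 ≤ e) :
    (W + single k k e).PosDef := by
  refine hW.add_posSemidef ?_
  rw [← diagonal_single]
  exact PosSemidef.diagonal (Pi.single_nonneg.2 he)

theorem PosDef.det_lt_det_add_single_self [Fintype n] {W : Matrix n n ℝ} (hW : W.PosDef)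
    (k : n) {e : ℝ} (he : 0 < e) : W.det < (W + single k k e).det := by
  rw [det_add_single_self]
  exact lt_add_of_pos_right _ (mul_pos he (hW.adjugate_apply_self_pos k))

end Matrix

theorem dual_solution_diagonal_general (p : ℕ) (S : Matrix (Fin p) (Fin p) ℝ)
    (lam : ℝ)
    (W : Matrix (Fin p) (Fin p) ℝ) (hW : W.PosDef)
    (hfeas : ∀ i j, |W i j - S i j| ≤ lam)
    (hopt : ∀ W' : Matrix (Fin p) (Fin p) ℝ, W'.PosDef →
      (∀ i j, |W' i j - S i j| ≤ lam) → W'.det ≤ W.det) :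
    ∀ k, W k k = S k k + lam := by
  intro k
  have hle : W k k ≤ S k k + lam := by linarith [(abs_le.1 (hfeas k k)).2]
  by_contra hne
  set e := S k k + lam - W k k
  have he : 0 < e := sub_pos.2 (lt_of_le_of_ne hle hne)
  have hfeas' : ∀ i j, |(W + single k k e) i j - S i j| ≤ lam := by
    intro i j
    rw [Matrix.add_apply, single_apply]
    split_ifs with hij
    · obtain ⟨rfl, rfl⟩ := hij
      rw [show W k k + e - S k k = lam by ring, abs_of_nonneg ((abs_nonneg _).trans (hfeas k k))]
    · rw [add_zero]
      exact hfeas i j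
  exact (hW.det_lt_det_add_single_self k he).not_ge (hopt _ (hW.add_single_self k he.le) hfeas')

theorem dual_solution_diagonal (p : ℕ) (S : Matrix (Fin p) (Fin p) ℝ)
    (hS : S.PosSemidef) (lam : ℝ) (hlam : 0 < lam)
    (W : Matrix (Fin p) (Fin p) ℝ) (hW : W.PosDef)
    (hfeas : ∀ i j, |W i j - S i j| ≤ lam)
    (hopt : ∀ W' : Matrix (Fin p) (Fin p) ℝ, W'.PosDef →
      (∀ i j, |W' i j - S i j| ≤ lam) → W'.det ≤ W.det) :
    ∀ k, W k k = S k k + lam :=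
  dual_solution_diagonal_general p S lam W hW hfeas hopt
end

section
/- For the function f(X) = -log det X + trace(SX) + λ‖X‖_1 on positive definite matrices, a matrix X ≻ 0 is the minimizer if and only if for all i, j: S_{ij} - (X^{-1})_{ij} = -λ when X_{ij} > 0, S_{ij} - (X^{-1})_{ij} = λ when X_{ij} < 0, and |S_{ij} - (X^{-1})_{ij}| ≤ λ when X_{ij} = 0. -/
/-!
The objective is convex: `log det` is concave with gradient `X⁻¹`, in the form
`log det Y - log det X ≤ tr (X⁻¹ (Y - X))`, which is `log s ≤ s - 1` applied to the eigenvalues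
of `X^{-1/2} Y X^{-1/2}`. Hence the entrywise conditions, which say that `X⁻¹ - S` is `λ` times a
subgradient of `‖·‖₁` at `X`, make `X` a minimizer.

Conversely, move `X` along the symmetric 0/1 direction `E` supported on `(i, j)` and `(j, i)`;
`X + t E` stays positive definite for small `t`. The same inequality taken at `X + t E` (rather
than at `X`) bounds the increase of the objective, giving
`0 ≤ t (S i j - (X + t E)⁻¹ i j) + λ (|X i j + t| - |X i j|)` for small `t`, and letting `t → 0`
from either side gives the conditions by continuity of the inverse; no derivative of `log det`
is needed.
-/

open Matrix Filter Topology

section StrictPositivity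

variable {A : Type*} [NormedRing A] [NormedAlgebra ℝ A] [CompleteSpace A] [StarRing A]
  [PartialOrder A] [StarOrderedRing A] [ContinuousFunctionalCalculus ℝ A IsSelfAdjoint]
  [NonnegSpectrumClass ℝ A]

lemma IsStrictlyPositive.eventually_of_isSelfAdjoint {a : A} (ha : IsStrictlyPositive a) :
    ∀ᶠ b in 𝓝 a, IsSelfAdjoint b → IsStrictlyPositive b := by
  rcases subsingleton_or_nontrivial A with hA | hA
  · exact Eventually.of_forall fun b _ => Subsingleton.elim a b ▸ ha
  obtain ⟨r, hr, hra⟩ := (CFC.exists_pos_algebraMap_le_iff ha.isSelfAdjoint).2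
    fun x hx => ha.spectrum_pos hx
  have hlim : Tendsto (fun b => ‖b - a‖ * ‖(1 : A)‖) (𝓝 a) (𝓝 0) := by
    have hcont : Continuous fun b : A => ‖b - a‖ * ‖(1 : A)‖ := by fun_prop
    simpa using hcont.tendsto a
  filter_upwards [hlim.eventually (gt_mem_nhds hr)] with b hb hbsa
  have hba : algebraMap ℝ A (-(‖b - a‖ * ‖(1 : A)‖)) ≤ b - a :=
    algebraMap_le_of_le_spectrum (fun x hx => neg_le_of_abs_le
      (spectrum.norm_le_norm_mul_of_mem hx)) (hbsa.sub ha.isSelfAdjoint)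
  have hb' : algebraMap ℝ A (r - ‖b - a‖ * ‖(1 : A)‖) ≤ b := by
    simpa [sub_eq_add_neg] using add_le_add hra hba
  refine (StarOrderedRing.isStrictlyPositive_iff_spectrum_pos (R := ℝ) b hbsa).2 fun x hx => ?_
  linarith [(algebraMap_le_iff_le_spectrum hbsa).1 hb' x hx]

end StrictPositivity

section OneSidedLimits

variable {k : ℝ → ℝ}

lemma ContinuousAt.nonneg_of_mul_nonneg_nhdsGT (hk : ContinuousAt k 0)
    (h : ∀ᶠ t in 𝓝[>] 0, 0 ≤ t * k t) : 0 ≤ k 0 :=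
  ge_of_tendsto (hk.mono_left nhdsWithin_le_nhds) <|
    (h.and self_mem_nhdsWithin).mono fun _ ht => nonneg_of_mul_nonneg_right ht.1 ht.2

lemma ContinuousAt.nonpos_of_mul_nonneg_nhdsLT (hk : ContinuousAt k 0)
    (h : ∀ᶠ t in 𝓝[<] 0, 0 ≤ t * k t) : k 0 ≤ 0 :=
  le_of_tendsto (hk.mono_left nhdsWithin_le_nhds) <|
    (h.and self_mem_nhdsWithin).mono fun _ ht => nonpos_of_mul_nonneg_right ht.1 ht.2

lemma ContinuousAt.eq_zero_of_mul_nonneg_nhds (hk : ContinuousAt k 0)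
    (h : ∀ᶠ t in 𝓝 0, 0 ≤ t * k t) : k 0 = 0 :=
  le_antisymm (hk.nonpos_of_mul_nonneg_nhdsLT (nhdsWithin_le_nhds h))
    (hk.nonneg_of_mul_nonneg_nhdsGT (nhdsWithin_le_nhds h))

end OneSidedLimits

/-- `0 ∈ g + lam • ∂|·|(x)`, i.e. `x` is a stationary point of `y ↦ g * y + lam * |y|`. -/
def AbsStationary (lam x g : ℝ) : Prop :=
  (0 < x → g = -lam) ∧ (x < 0 → g = lam) ∧ (x = 0 → |g| ≤ lam)

namespace AbsStationary

variable {lam x g : ℝ}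

lemma mul_add_mul_abs_le (h : AbsStationary lam x g) (hlam : 0 ≤ lam) (y : ℝ) :
    g * x + lam * |x| ≤ g * y + lam * |y| := by
  obtain ⟨hpos, hneg, hzero⟩ := h
  rcases lt_trichotomy x 0 with hx | rfl | hx
  · rw [hneg hx, abs_of_neg hx]
    nlinarith [neg_abs_le y]
  · have := abs_mul g y ▸ neg_abs_le (g * y)
    have := mul_le_mul_of_nonneg_right (hzero rfl) (abs_nonneg y)
    simp only [mul_zero, abs_zero]
    linarith
  · rw [hpos hx, abs_of_pos hx]
    nlinarith [le_abs_self y]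

lemma of_eventually {h : ℝ → ℝ} (hh : ContinuousAt h 0)
    (hloc : ∀ᶠ t in 𝓝 0, 0 ≤ t * h t + lam * (|x + t| - |x|)) : AbsStationary lam x (h 0) := by
  have hplus : ContinuousAt (fun t => h t + lam) 0 := hh.add continuousAt_const
  have hminus : ContinuousAt (fun t => h t - lam) 0 := hh.sub continuousAt_const
  refine ⟨fun hx => ?_, fun hx => ?_, fun hx => ?_⟩
  · have hmul : ∀ᶠ t in 𝓝 0, 0 ≤ t * (h t + lam) := by
      filter_upwards [hloc, eventually_gt_nhds (neg_neg_of_pos hx)] with t ht hxt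
      rw [abs_of_pos (by linarith : 0 < x + t), abs_of_pos hx] at ht
      linarith
    linarith [hplus.eq_zero_of_mul_nonneg_nhds hmul]
  · have hmul : ∀ᶠ t in 𝓝 0, 0 ≤ t * (h t - lam) := by
      filter_upwards [hloc, eventually_lt_nhds (neg_pos_of_neg hx)] with t ht hxt
      rw [abs_of_neg (by linarith : x + t < 0), abs_of_neg hx] at ht
      linarith
    linarith [hminus.eq_zero_of_mul_nonneg_nhds hmul]
  · subst hx
    have hright : ∀ᶠ t in 𝓝[>] 0, 0 ≤ t * (h t + lam) := by
      filter_upwards [nhdsWithin_le_nhds hloc, self_mem_nhdsWithin] with t ht (htpos : 0 < t)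
      rw [zero_add, abs_zero, abs_of_pos htpos] at ht
      linarith
    have hleft : ∀ᶠ t in 𝓝[<] 0, 0 ≤ t * (h t - lam) := by
      filter_upwards [nhdsWithin_le_nhds hloc, self_mem_nhdsWithin] with t ht (htneg : t < 0)
      rw [zero_add, abs_zero, abs_of_neg htneg] at ht
      linarith
    rw [abs_le]
    constructor
    · linarith [hplus.nonneg_of_mul_nonneg_nhdsGT hright]
    · linarith [hminus.nonpos_of_mul_nonneg_nhdsLT hleft]

end AbsStationary

namespace Matrix

variable {n : Type*} [DecidableEq n]

def symmSingle (i j : n) : Matrix n n ℝ :=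
  of fun k l => if (k = i ∧ l = j) ∨ (k = j ∧ l = i) then 1 else 0

section SymmSingle

variable (i j : n)

lemma isHermitian_symmSingle : (symmSingle i j).IsHermitian := by
  refine isHermitian_iff_isSymm.2 (IsSymm.ext fun k l => ?_)
  simp only [symmSingle, of_apply]
  exact if_congr (by tauto) rfl rfl

lemma symmSingle_mul_eq {A : Matrix n n ℝ} (hA : A.IsHermitian) (u : ℝ → ℝ) (k l : n) :
    symmSingle i j k l * u (A k l) = symmSingle i j k l * u (A i j) := by
  simp only [symmSingle, of_apply]
  split_ifs with h
  · rcases h with ⟨rfl, rfl⟩ | ⟨rfl, rfl⟩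
    · rfl
    · rw [(isHermitian_iff_isSymm.1 hA).apply]
  · simp

variable [Fintype n]

lemma sum_symmSingle_mul {A : Matrix n n ℝ} (hA : A.IsHermitian) (u : ℝ → ℝ) :
    ∑ k, ∑ l, symmSingle i j k l * u (A k l) = (∑ k, ∑ l, symmSingle i j k l) * u (A i j) := by
  simp_rw [symmSingle_mul_eq i j hA, Finset.sum_mul]

lemma sum_symmSingle_pos : 0 < ∑ k, ∑ l, symmSingle i j k l := by
  have hnonneg : ∀ k l, 0 ≤ symmSingle i j k l := fun k l => by
    simp only [symmSingle, of_apply]; split_ifs <;> norm_num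
  calc (0 : ℝ) < symmSingle i j i j := by simp [symmSingle]
    _ ≤ ∑ l, symmSingle i j i l :=
        Finset.single_le_sum (fun l _ => hnonneg i l) (Finset.mem_univ j)
    _ ≤ ∑ k, ∑ l, symmSingle i j k l :=
        Finset.single_le_sum (f := fun k => ∑ l, symmSingle i j k l)
          (fun k _ => Finset.sum_nonneg fun l _ => hnonneg k l) (Finset.mem_univ i)

lemma trace_mul_symmSingle {A : Matrix n n ℝ} (hA : A.IsHermitian) :
    (A * symmSingle i j).trace = (∑ k, ∑ l, symmSingle i j k l) * A i j := by
  have hH := isHermitian_iff_isSymm.1 (isHermitian_symmSingle i j)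
  simp only [trace, diag_apply, mul_apply, hH.apply, mul_comm (A _ _)]
  exact sum_symmSingle_mul i j hA id

lemma sum_abs_add_smul_symmSingle {X : Matrix n n ℝ} (hX : X.IsHermitian) (t : ℝ) :
    ∑ k, ∑ l, |(X + t • symmSingle i j) k l| =
      ∑ k, ∑ l, |X k l| + (∑ k, ∑ l, symmSingle i j k l) * (|X i j + t| - |X i j|) := by
  have hentry : ∀ k l, |(X + t • symmSingle i j) k l| =
      |X k l| + symmSingle i j k l * (|X k l + t| - |X k l|) := fun k l => by
    simp only [symmSingle, add_apply, smul_apply, of_apply, smul_eq_mul]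
    split_ifs <;> simp
  simp_rw [hentry, Finset.sum_add_distrib, sum_symmSingle_mul i j hX fun a => |a + t| - |a|]

end SymmSingle

variable [Fintype n]

lemma continuousAt_inv_add_smul_apply {X : Matrix n n ℝ} (hX : IsUnit X.det)
    (H : Matrix n n ℝ) (i j : n) : ContinuousAt (fun t : ℝ => (X + t • H)⁻¹ i j) 0 := by
  have hinv : ContinuousAt Inv.inv X :=
    continuousAt_matrix_inv _ (NormedRing.inverse_continuousAt hX.unit)
  have h : ContinuousAt (fun t : ℝ => (X + t • H)⁻¹) 0 :=
    hinv.comp_of_eq (by fun_prop) (by simp)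
  exact (continuous_apply j).continuousAt.comp ((continuous_apply i).continuousAt.comp h)

namespace PosDef

open scoped Matrix.Norms.L2Operator MatrixOrder in
lemma eventually_add_smul {X : Matrix n n ℝ} (hX : X.PosDef) {H : Matrix n n ℝ}
    (hH : H.IsHermitian) : ∀ᶠ t : ℝ in 𝓝 0, (X + t • H).PosDef := by
  have hlim : Tendsto (fun t : ℝ => X + t • H) (𝓝 0) (𝓝 X) := by
    simpa using ((continuous_id.smul continuous_const).const_add X).tendsto (0 : ℝ)
  have hXpos : IsStrictlyPositive X := isStrictlyPositive_iff_posDef.2 hX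
  filter_upwards [hlim.eventually hXpos.eventually_of_isSelfAdjoint] with t ht
  exact isStrictlyPositive_iff_posDef.1 (ht (hX.isHermitian.add (hH.smul (IsSelfAdjoint.all t))))

lemma log_det_le_trace_sub_card_s17 {M : Matrix n n ℝ} (hM : M.PosDef) :
    Real.log M.det ≤ M.trace - Fintype.card n := by
  have hpos := hM.eigenvalues_pos
  rw [hM.isHermitian.det_eq_prod_eigenvalues, hM.isHermitian.trace_eq_sum_eigenvalues]
  simp only [RCLike.ofReal_real_eq_id, id]
  rw [Real.log_prod fun i _ => (hpos i).ne']
  calc ∑ i, Real.log (hM.isHermitian.eigenvalues i)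
      ≤ ∑ i, (hM.isHermitian.eigenvalues i - 1) :=
        Finset.sum_le_sum fun i _ => Real.log_le_sub_one_of_pos (hpos i)
    _ = _ := by simp [Finset.sum_sub_distrib]

open scoped MatrixOrder in
lemma log_det_sub_log_det_le {X Y : Matrix n n ℝ} (hX : X.PosDef) (hY : Y.PosDef) :
    Real.log Y.det - Real.log X.det ≤ (X⁻¹ * (Y - X)).trace := by
  set R := CFC.sqrt X⁻¹
  have hRpos : IsStrictlyPositive R := (isStrictlyPositive_iff_posDef.2 hX.inv).sqrt
  have hRR : R * R = X⁻¹ := CFC.sqrt_mul_sqrt_self _ hX.inv.posSemidef.nonneg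
  have hRstar : star R = R := hRpos.isSelfAdjoint.star_eq
  have hM : (star R * Y * R).PosDef := (IsUnit.posDef_star_left_conjugate_iff hRpos.isUnit).2 hY
  have hdet : Real.log (star R * Y * R).det = Real.log Y.det - Real.log X.det := by
    rw [hRstar, det_mul, det_mul, mul_right_comm, ← det_mul, hRR, det_nonsing_inv,
      Ring.inverse_eq_inv', Real.log_mul (inv_ne_zero hX.det_pos.ne') hY.det_pos.ne', Real.log_inv]
    ring
  have htrace : (star R * Y * R).trace = (X⁻¹ * (Y - X)).trace + Fintype.card n := by
    rw [hRstar, trace_mul_cycle, hRR, mul_sub, trace_sub,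
      nonsing_inv_mul _ hX.det_pos.ne'.isUnit, trace_one, sub_add_cancel]
  linarith [hM.log_det_le_trace_sub_card_s17]

end PosDef

end Matrix

section Objective

variable {n : Type*} [Fintype n] [DecidableEq n]

noncomputable def sparseMLObjective (S : Matrix n n ℝ) (lam : ℝ) (X : Matrix n n ℝ) : ℝ :=
  -Real.log X.det + (S * X).trace + lam * ∑ i, ∑ j, |X i j|

variable {S X Y : Matrix n n ℝ} {lam : ℝ}

lemma le_sparseMLObjective_sub (hX : X.PosDef) (hY : Y.PosDef) :
    ((S - X⁻¹) * (Y - X)).trace + lam * (∑ i, ∑ j, |Y i j| - ∑ i, ∑ j, |X i j|) ≤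
      sparseMLObjective S lam Y - sparseMLObjective S lam X := by
  have hlog := hX.log_det_sub_log_det_le hY
  simp only [sparseMLObjective, sub_mul, mul_sub, trace_sub] at hlog ⊢
  linarith

lemma sparseMLObjective_sub_le (hX : X.PosDef) (hY : Y.PosDef) :
    sparseMLObjective S lam Y - sparseMLObjective S lam X ≤
      ((S - Y⁻¹) * (Y - X)).trace + lam * (∑ i, ∑ j, |Y i j| - ∑ i, ∑ j, |X i j|) := by
  have hlog := hY.log_det_sub_log_det_le hX
  simp only [sparseMLObjective, sub_mul, mul_sub, trace_sub] at hlog ⊢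
  linarith

lemma sparseMLObjective_le_of_absStationary (hlam : 0 ≤ lam) (hX : X.PosDef)
    (hstat : ∀ i j, AbsStationary lam (X i j) (S i j - X⁻¹ i j)) (hY : Y.PosDef) :
    sparseMLObjective S lam X ≤ sparseMLObjective S lam Y := by
  have hsymm := isHermitian_iff_isSymm.1 (hY.isHermitian.sub hX.isHermitian)
  have hsum : ((S - X⁻¹) * (Y - X)).trace + lam * (∑ i, ∑ j, |Y i j| - ∑ i, ∑ j, |X i j|) =
      ∑ i, ∑ j, (((S i j - X⁻¹ i j) * Y i j + lam * |Y i j|) -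
        ((S i j - X⁻¹ i j) * X i j + lam * |X i j|)) := by
    simp only [trace, diag_apply, mul_apply, hsymm.apply, Matrix.sub_apply, Finset.mul_sum,
      ← Finset.sum_sub_distrib, ← Finset.sum_add_distrib]
    exact Finset.sum_congr rfl fun i _ => Finset.sum_congr rfl fun j _ => by ring
  have hnonneg : 0 ≤ ((S - X⁻¹) * (Y - X)).trace +
      lam * (∑ i, ∑ j, |Y i j| - ∑ i, ∑ j, |X i j|) := by
    rw [hsum]
    exact Finset.sum_nonneg fun i _ => Finset.sum_nonneg fun j _ =>
      sub_nonneg.2 ((hstat i j).mul_add_mul_abs_le hlam _)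
  linarith [le_sparseMLObjective_sub (S := S) (lam := lam) hX hY]

lemma absStationary_of_forall_le (hS : S.IsHermitian) (hX : X.PosDef)
    (hmin : ∀ Y : Matrix n n ℝ, Y.PosDef → sparseMLObjective S lam X ≤ sparseMLObjective S lam Y)
    (i j : n) : AbsStationary lam (X i j) (S i j - X⁻¹ i j) := by
  have hc := sum_symmSingle_pos i j
  have hcont : ContinuousAt (fun t : ℝ => S i j - (X + t • symmSingle i j)⁻¹ i j) 0 :=
    continuousAt_const.sub (continuousAt_inv_add_smul_apply hX.det_pos.ne'.isUnit _ i j)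
  convert AbsStationary.of_eventually hcont ?_ using 2
  · simp
  filter_upwards [hX.eventually_add_smul (isHermitian_symmSingle i j)] with t hY
  have hle := sparseMLObjective_sub_le (S := S) (lam := lam) hX hY
  rw [add_sub_cancel_left, Matrix.mul_smul, trace_smul,
    trace_mul_symmSingle i j (hS.sub hY.isHermitian.inv),
    sum_abs_add_smul_symmSingle i j hX.isHermitian, Matrix.sub_apply, smul_eq_mul] at hle
  refine nonneg_of_mul_nonneg_right ?_ hc
  linarith [hmin _ hY]

end Objective

theorem sml_subgradient_characterization (p : ℕ) (S : Matrix (Fin p) (Fin p) ℝ)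
    (hS : S.IsHermitian) (lam : ℝ) (hlam : 0 < lam)
    (X : Matrix (Fin p) (Fin p) ℝ) (hX : X.PosDef) :
    (∀ Y : Matrix (Fin p) (Fin p) ℝ, Y.PosDef →
      -Real.log X.det + (S * X).trace + lam * ∑ i, ∑ j, |X i j| ≤
        -Real.log Y.det + (S * Y).trace + lam * ∑ i, ∑ j, |Y i j|) ↔
    (∀ i j,
      (0 < X i j → S i j - X⁻¹ i j = -lam) ∧
      (X i j < 0 → S i j - X⁻¹ i j = lam) ∧
      (X i j = 0 → |S i j - X⁻¹ i j| ≤ lam)) :=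
  ⟨absStationary_of_forall_le hS hX,
    fun hstat _ hY => sparseMLObjective_le_of_absStationary hlam.le hX hstat hY⟩
end

section
/- If the second moment matrix S has block diagonal structure S = blkdiag(C_1, ..., C_ℓ) apart from off-block entries all bounded in absolute value by less than λ, and X is block diagonal with each block solving the penalized problem restricted to that block, then X is the global solution of min_{X ≻ 0} -log det X + trace(SX) + λ‖X‖_1. -/
/-!
Off the blocks `|S i j| ≤ λ`, so every off-block term `S i j * Y j i + λ |Y i j|` of the objective
is nonnegative, and Fischer's inequality `det Y ≤ ∏ₖ det Yₖₖ` controls the log-determinant. Hence the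
objective of any `Y ≻ 0` dominates the sum of the block objectives of its diagonal blocks `Yₖₖ`.
Each of these dominates the block objective of `Xₖₖ`, and since `X` is block diagonal the block
objectives of the `Xₖₖ` add up to the objective of `X`.
-/

open Finset

namespace Matrix

variable {n ι α : Type*}

section Sums

variable {β : Type*} [AddCommMonoid β] [DecidableEq ι] [Fintype n] [Fintype ι] (c : n → ι)

theorem sum_sum_eq_sum_blocks (f : n → n → β) (hf : ∀ i j, c i ≠ c j → f i j = 0) :
    ∑ i, ∑ j, f i j = ∑ k, ∑ i : {i // c i = k}, ∑ j : {j // c j = k}, f i j := by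
  rw [← Fintype.sum_fiberwise c]
  refine sum_congr rfl fun k _ => sum_congr rfl fun i _ => ?_
  rw [← Fintype.sum_fiberwise c, Fintype.sum_eq_single k]
  intro k' hk'
  exact sum_eq_zero fun j _ => hf i j (by rw [i.2, j.2]; exact hk'.symm)

theorem sum_blocks_le_sum_sum [PartialOrder β] [IsOrderedAddMonoid β] (f : n → n → β)
    (hf : ∀ i j, c i ≠ c j → 0 ≤ f i j) :
    ∑ k, ∑ i : {i // c i = k}, ∑ j : {j // c j = k}, f i j ≤ ∑ i, ∑ j, f i j :=
  calc ∑ k, ∑ i : {i // c i = k}, ∑ j : {j // c j = k}, f i j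
      = ∑ k, ∑ i : {i // c i = k}, ∑ j : {j // c j = k}, if c i = c j then f i j else 0 :=
        sum_congr rfl fun k _ => sum_congr rfl fun i _ => sum_congr rfl fun j _ =>
          (if_pos (i.2.trans j.2.symm)).symm
    _ = ∑ i, ∑ j, if c i = c j then f i j else 0 :=
        (sum_sum_eq_sum_blocks c _ fun i j h => if_neg h).symm
    _ ≤ ∑ i, ∑ j, f i j := sum_le_sum fun i _ => sum_le_sum fun j _ => by
        split_ifs with h
        exacts [le_rfl, hf i j h]

end Sums

def IsBlockDiagonal [Zero α] (c : n → ι) (M : Matrix n n α) : Prop :=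
  ∀ i j, c i ≠ c j → M i j = 0

def blockDiagonalPart [DecidableEq ι] [Zero α] (c : n → ι) (M : Matrix n n α) : Matrix n n α :=
  of fun i j => if c i = c j then M i j else 0

variable {c : n → ι}

theorem isBlockDiagonal_blockDiagonalPart [DecidableEq ι] [Zero α] (M : Matrix n n α) :
    IsBlockDiagonal c (blockDiagonalPart c M) :=
  fun _ _ h => if_neg h

theorem toSquareBlock_blockDiagonalPart [DecidableEq ι] [Zero α] (M : Matrix n n α) (k : ι) :
    (blockDiagonalPart c M).toSquareBlock c k = M.toSquareBlock c k := by
  ext i j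
  exact if_pos (i.2.trans j.2.symm)

namespace IsBlockDiagonal

-- Block diagonal means block triangular for some linear order on `ι` and for its dual.
theorem inv [Fintype n] [DecidableEq n] [CommRing α] {M : Matrix n n α}
    (hM : IsBlockDiagonal c M) : IsBlockDiagonal c M⁻¹ := by
  let : LinearOrder ι := IsWellOrder.linearOrder WellOrderingRel
  by_cases hdet : IsUnit M.det
  · let := M.invertibleOfIsUnitDet hdet
    intro i j hij
    rcases hij.lt_or_gt with hlt | hlt
    · exact blockTriangular_inv_of_blockTriangular (b := OrderDual.toDual ∘ c)
        (fun i j h => hM i j h.ne') hlt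
    · exact blockTriangular_inv_of_blockTriangular (fun i j h => hM i j h.ne') hlt
  · rw [nonsing_inv_apply_not_isUnit _ hdet]
    exact fun _ _ _ => rfl

theorem det_eq_prod [DecidableEq ι] [Fintype ι] [Fintype n] [DecidableEq n] [CommRing α]
    {M : Matrix n n α} (hM : IsBlockDiagonal c M) : M.det = ∏ k, (M.toSquareBlock c k).det :=
  let : LinearOrder ι := IsWellOrder.linearOrder WellOrderingRel
  BlockTriangular.det_fintype fun i j h => hM i j h.ne'

theorem trace_mul_blockDiagonalPart [DecidableEq ι] [Fintype n] [NonUnitalNonAssocSemiring α]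
    {A : Matrix n n α} (hA : IsBlockDiagonal c A) (M : Matrix n n α) :
    (A * blockDiagonalPart c M).trace = (A * M).trace := by
  simp only [trace, diag, mul_apply]
  refine sum_congr rfl fun i _ => sum_congr rfl fun j _ => ?_
  by_cases h : c i = c j
  · exact congrArg _ (if_pos h.symm)
  · simp [hA i j h]

theorem dotProduct_mulVec [DecidableEq ι] [Fintype ι] [Fintype n] [NonUnitalNonAssocSemiring α]
    {M : Matrix n n α} (hM : IsBlockDiagonal c M) (x y : n → α) :
    x ⬝ᵥ M *ᵥ y =
      ∑ k, (fun i : {i // c i = k} => x i) ⬝ᵥ M.toSquareBlock c k *ᵥ fun i => y i := by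
  simp only [dotProduct, mulVec, mul_sum]
  rw [sum_sum_eq_sum_blocks c _ fun i j h => by simp [hM i j h]]
  rfl

theorem isHermitian [AddMonoid α] [StarAddMonoid α] {M : Matrix n n α}
    (hM : IsBlockDiagonal c M) (h : ∀ k, (M.toSquareBlock c k).IsHermitian) :
    M.IsHermitian := by
  ext i j
  by_cases hij : c j = c i
  · exact congrFun₂ (h (c i)) ⟨i, rfl⟩ ⟨j, hij⟩
  · simp [conjTranspose_apply, hM i j (Ne.symm hij), hM j i hij]

theorem posDef [DecidableEq ι] [Fintype ι] [Fintype n] [Ring α] [PartialOrder α] [StarRing α]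
    [IsOrderedAddMonoid α] {M : Matrix n n α} (hM : IsBlockDiagonal c M)
    (h : ∀ k, (M.toSquareBlock c k).PosDef) : M.PosDef := by
  refine .of_dotProduct_mulVec_pos (hM.isHermitian fun k => (h k).isHermitian) fun x hx => ?_
  obtain ⟨i, hi⟩ := Function.ne_iff.mp hx
  rw [hM.dotProduct_mulVec]
  exact sum_pos' (fun k _ => (h k).posSemidef.dotProduct_mulVec_nonneg _)
    ⟨c i, mem_univ _, (h (c i)).dotProduct_mulVec_pos (Function.ne_iff.mpr ⟨⟨i, rfl⟩, hi⟩)⟩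

end IsBlockDiagonal

theorem PosDef.toSquareBlock [Ring α] [PartialOrder α] [StarRing α] {M : Matrix n n α}
    (hM : M.PosDef) (c : n → ι) (k : ι) : (M.toSquareBlock c k).PosDef :=
  hM.submatrix Subtype.val_injective

theorem posDef_blockDiagonalPart [DecidableEq ι] [Fintype ι] [Fintype n] {Y : Matrix n n ℝ}
    (hY : Y.PosDef) (c : n → ι) : (blockDiagonalPart c Y).PosDef :=
  isBlockDiagonal_blockDiagonalPart Y |>.posDef fun k => by
    rw [toSquareBlock_blockDiagonalPart]
    exact hY.toSquareBlock c k

variable [Fintype n] [DecidableEq n]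

theorem PosDef.log_det_le_trace_sub_card_s18 {A : Matrix n n ℝ} (hA : A.PosDef) :
    Real.log A.det ≤ A.trace - Fintype.card n := by
  rw [hA.isHermitian.det_eq_prod_eigenvalues, hA.isHermitian.trace_eq_sum_eigenvalues]
  simp only [RCLike.ofReal_real_eq_id, id]
  rw [Real.log_prod fun i _ => (hA.eigenvalues_pos i).ne', Fintype.card_eq_sum_ones, Nat.cast_sum,
    Nat.cast_one, ← sum_sub_distrib]
  exact sum_le_sum fun i _ => Real.log_le_sub_one_of_pos (hA.eigenvalues_pos i)

-- Writing `A = Rᴴ R`, the positive definite matrix `R B Rᴴ` has the determinant and trace of `A B`.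
open scoped MatrixOrder in
theorem PosDef.log_det_mul_le_trace_sub_card {A B : Matrix n n ℝ} (hA : A.PosDef)
    (hB : B.PosDef) : Real.log (A * B).det ≤ (A * B).trace - Fintype.card n := by
  obtain ⟨R, rfl⟩ := CStarAlgebra.nonneg_iff_eq_star_mul_self.mp hA.posSemidef.nonneg
  rw [star_eq_conjTranspose] at hA ⊢
  have hR : IsUnit R.det := by
    have hdet := hA.det_pos.ne'
    rw [det_mul] at hdet
    exact (right_ne_zero_of_mul hdet).isUnit
  have hRBR : (R * B * Rᴴ).PosDef := hB.mul_mul_conjTranspose_same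
    (vecMul_injective_iff_isUnit.mpr ((isUnit_iff_isUnit_det R).mpr hR))
  have hdet : (R * B * Rᴴ).det = (Rᴴ * R * B).det := by
    simp only [det_mul]
    ring
  have htr : (R * B * Rᴴ).trace = (Rᴴ * R * B).trace := by
    rw [trace_mul_cycle, mul_assoc]
  simpa only [hdet, htr] using hRBR.log_det_le_trace_sub_card_s18

variable [DecidableEq ι] [Fintype ι]

/-- Fischer's inequality. For `Z` the block-diagonal part of `Y`, `Z⁻¹` is block diagonal, so
`tr (Z⁻¹ Y) = tr (Z⁻¹ Z) = card n` and the bound on `log det (Z⁻¹ Y)` forces `det Y ≤ det Z`. -/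
theorem PosDef.det_le_det_blockDiagonalPart {Y : Matrix n n ℝ} (hY : Y.PosDef) (c : n → ι) :
    Y.det ≤ (blockDiagonalPart c Y).det := by
  set Z := blockDiagonalPart c Y
  have hZ : Z.PosDef := posDef_blockDiagonalPart hY c
  have htr : (Z⁻¹ * Y).trace = Fintype.card n := by
    rw [← (isBlockDiagonal_blockDiagonalPart Y).inv.trace_mul_blockDiagonalPart,
      nonsing_inv_mul _ hZ.det_pos.ne'.isUnit, trace_one]
  have hlog := hZ.inv.log_det_mul_le_trace_sub_card hY
  rwa [htr, sub_self, det_mul, det_nonsing_inv, Ring.inverse_eq_inv',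
    Real.log_nonpos_iff (by positivity [hZ.det_pos, hY.det_pos]),
    inv_mul_le_one₀ hZ.det_pos] at hlog

theorem PosDef.det_le_prod_det_toSquareBlock {Y : Matrix n n ℝ} (hY : Y.PosDef) (c : n → ι) :
    Y.det ≤ ∏ k, (Y.toSquareBlock c k).det := by
  simpa only [(isBlockDiagonal_blockDiagonalPart Y).det_eq_prod, toSquareBlock_blockDiagonalPart]
    using hY.det_le_det_blockDiagonalPart c

end Matrix

open Matrix

section GraphicalLasso

variable {n ι : Type*} [Fintype n] [DecidableEq n]

noncomputable def glassoObjective (S : Matrix n n ℝ) (lam : ℝ) (Y : Matrix n n ℝ) : ℝ :=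
  -Real.log Y.det + (S * Y).trace + lam * ∑ i, ∑ j, |Y i j|

theorem glassoObjective_eq_neg_log_det_add_sum (S : Matrix n n ℝ) (lam : ℝ) (Y : Matrix n n ℝ) :
    glassoObjective S lam Y = -Real.log Y.det + ∑ i, ∑ j, (S i j * Y j i + lam * |Y i j|) := by
  simp only [glassoObjective, trace, Matrix.diag, mul_apply, mul_sum, ← sum_add_distrib, add_assoc]

variable [DecidableEq ι] [Fintype ι] {c : n → ι}

theorem Matrix.IsBlockDiagonal.glassoObjective_eq_sum {X : Matrix n n ℝ}
    (hX : IsBlockDiagonal c X) (hdet : ∀ k, (X.toSquareBlock c k).det ≠ 0)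
    (S : Matrix n n ℝ) (lam : ℝ) :
    glassoObjective S lam X =
      ∑ k, glassoObjective (S.toSquareBlock c k) lam (X.toSquareBlock c k) := by
  simp only [glassoObjective_eq_neg_log_det_add_sum]
  rw [sum_add_distrib, sum_neg_distrib, hX.det_eq_prod, Real.log_prod fun k _ => hdet k,
    sum_sum_eq_sum_blocks c _ fun i j h => by simp [hX i j h, hX j i (Ne.symm h)]]
  rfl

theorem sum_glassoObjective_toSquareBlock_le {S Y : Matrix n n ℝ} {lam : ℝ}
    (hS : ∀ i j, c i ≠ c j → |S i j| ≤ lam) (hY : Y.PosDef) :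
    ∑ k, glassoObjective (S.toSquareBlock c k) lam (Y.toSquareBlock c k) ≤
      glassoObjective S lam Y := by
  have hlogdet : Real.log Y.det ≤ ∑ k, Real.log (Y.toSquareBlock c k).det := by
    rw [← Real.log_prod fun k _ => (hY.toSquareBlock c k).det_pos.ne']
    exact Real.log_le_log hY.det_pos (hY.det_le_prod_det_toSquareBlock c)
  have hoff : ∀ i j, c i ≠ c j → 0 ≤ S i j * Y j i + lam * |Y i j| := fun i j h => by
    have : |S i j * Y j i| ≤ lam * |Y i j| := by
      rw [abs_mul, ← hY.isHermitian.apply i j, star_trivial]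
      exact mul_le_mul_of_nonneg_right (hS i j h) (abs_nonneg _)
    linarith [neg_abs_le (S i j * Y j i)]
  simp only [glassoObjective_eq_neg_log_det_add_sum]
  rw [sum_add_distrib, sum_neg_distrib]
  exact add_le_add (neg_le_neg hlogdet)
    (sum_blocks_le_sum_sum c (fun i j => S i j * Y j i + lam * |Y i j|) hoff)

end GraphicalLasso

theorem block_diagonal_global_solution_general (p ℓ : ℕ) (c : Fin p → Fin ℓ)
    (S : Matrix (Fin p) (Fin p) ℝ) (lam : ℝ)
    (hoff : ∀ i j, c i ≠ c j → |S i j| < lam)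
    (X : Matrix (Fin p) (Fin p) ℝ)
    (hXblk : ∀ i j, c i ≠ c j → X i j = 0)
    (hblkopt : ∀ k : Fin ℓ,
      (X.submatrix (Subtype.val : {i // c i = k} → Fin p) Subtype.val).PosDef ∧
      ∀ Y : Matrix {i // c i = k} {i // c i = k} ℝ, Y.PosDef →
        -Real.log (X.submatrix (Subtype.val : {i // c i = k} → Fin p) Subtype.val).det
            + ((S.submatrix (Subtype.val : {i // c i = k} → Fin p) Subtype.val) *
                (X.submatrix (Subtype.val : {i // c i = k} → Fin p) Subtype.val)).trace
            + lam * ∑ i : {i // c i = k}, ∑ j : {i // c i = k},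
                |X.submatrix (Subtype.val : {i // c i = k} → Fin p) Subtype.val i j| ≤
          -Real.log Y.det
            + ((S.submatrix (Subtype.val : {i // c i = k} → Fin p) Subtype.val) * Y).trace
            + lam * ∑ i : {i // c i = k}, ∑ j : {i // c i = k}, |Y i j|) :
    X.PosDef ∧
    ∀ Y : Matrix (Fin p) (Fin p) ℝ, Y.PosDef →
      -Real.log X.det + (S * X).trace + lam * ∑ i, ∑ j, |X i j| ≤
        -Real.log Y.det + (S * Y).trace + lam * ∑ i, ∑ j, |Y i j| := by
  have hX : IsBlockDiagonal c X := hXblk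
  refine ⟨hX.posDef fun k => (hblkopt k).1, fun Y hY => ?_⟩
  calc glassoObjective S lam X
      = ∑ k, glassoObjective (S.toSquareBlock c k) lam (X.toSquareBlock c k) :=
        hX.glassoObjective_eq_sum (fun k => (hblkopt k).1.det_pos.ne') S lam
    _ ≤ ∑ k, glassoObjective (S.toSquareBlock c k) lam (Y.toSquareBlock c k) :=
        sum_le_sum fun k _ => (hblkopt k).2 _ (hY.toSquareBlock c k)
    _ ≤ glassoObjective S lam Y :=
        sum_glassoObjective_toSquareBlock_le (fun i j h => (hoff i j h).le) hY

theorem block_diagonal_global_solution (p ℓ : ℕ) (c : Fin p → Fin ℓ)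
    (S : Matrix (Fin p) (Fin p) ℝ) (hS : S.IsHermitian) (lam : ℝ) (hlam : 0 < lam)
    (hoff : ∀ i j, c i ≠ c j → |S i j| < lam)
    (X : Matrix (Fin p) (Fin p) ℝ) (hXsym : X.IsHermitian)
    (hXblk : ∀ i j, c i ≠ c j → X i j = 0)
    (hblkopt : ∀ k : Fin ℓ,
      (X.submatrix (Subtype.val : {i // c i = k} → Fin p) Subtype.val).PosDef ∧
      ∀ Y : Matrix {i // c i = k} {i // c i = k} ℝ, Y.PosDef →
        -Real.log (X.submatrix (Subtype.val : {i // c i = k} → Fin p) Subtype.val).det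
            + ((S.submatrix (Subtype.val : {i // c i = k} → Fin p) Subtype.val) *
                (X.submatrix (Subtype.val : {i // c i = k} → Fin p) Subtype.val)).trace
            + lam * ∑ i : {i // c i = k}, ∑ j : {i // c i = k},
                |X.submatrix (Subtype.val : {i // c i = k} → Fin p) Subtype.val i j| ≤
          -Real.log Y.det
            + ((S.submatrix (Subtype.val : {i // c i = k} → Fin p) Subtype.val) * Y).trace
            + lam * ∑ i : {i // c i = k}, ∑ j : {i // c i = k}, |Y i j|) :
    X.PosDef ∧
    ∀ Y : Matrix (Fin p) (Fin p) ℝ, Y.PosDef →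
      -Real.log X.det + (S * X).trace + lam * ∑ i, ∑ j, |X i j| ≤
        -Real.log Y.det + (S * Y).trace + lam * ∑ i, ∑ j, |Y i j| :=
  block_diagonal_global_solution_general p ℓ c S lam hoff X hXblk hblkopt
end
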